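/- For p ≥ 2, t > 0 and any real s, min(1, p-1) · p · max(t, |s|)^{p-2} ≤ f_t''(s) ≤ max(1, p-1) · p · max(t, |s|)^{p-2}, where f_t''(s) is interpreted as p t^{p-2} for |s| ≤ t and p(p-1)|s|^{p-2} for |s| > t. -/
import Mathlib


noncomputable def ftSecond (p t s : ℝ) : ℝ :=
  if |s| ≤ t then p * t ^ (p - 2) else p * (p - 1) * |s| ^ (p - 2)

theorem ftSecond_bounds (p t : ℝ) (hp : 2 ≤ p) (ht : 0 < t) (s : ℝ) :
    min 1 (p - 1) * p * max t |s| ^ (p - 2) ≤ ftSecond p t s ∧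
    ftSecond p t s ≤ max 1 (p - 1) * p * max t |s| ^ (p - 2) := by
  have hp1 : (1 : ℝ) ≤ p - 1 := by linarith
  have hmin : min 1 (p - 1) = 1 := min_eq_left hp1
  have hmax : max 1 (p - 1) = p - 1 := max_eq_right hp1
  have hp0 : (0 : ℝ) ≤ p := by linarith
  unfold ftSecond
  split_ifs with h
  · have hm : max t |s| = t := max_eq_left h
    rw [hmin, hmax, hm]
    have hpow : (0 : ℝ) ≤ t ^ (p - 2) := Real.rpow_nonneg ht.le _
    constructor
    · nlinarith [mul_nonneg (mul_nonneg hp0 (by linarith : (0:ℝ) ≤ p - 2)) hpow]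
    · nlinarith [mul_nonneg (mul_nonneg hp0 (by linarith : (0:ℝ) ≤ p - 2)) hpow]
  · push_neg at h
    have hm : max t |s| = |s| := max_eq_right h.le
    rw [hmin, hmax, hm]
    have hpow : (0 : ℝ) ≤ |s| ^ (p - 2) := Real.rpow_nonneg (abs_nonneg s) _
    constructor
    · nlinarith [mul_nonneg (mul_nonneg hp0 (by linarith : (0:ℝ) ≤ p - 2)) hpow]
    · nlinarith
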